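/- arXiv:2602.03421 — 3 statements merged into one kernel-verified Lean document; each statement's English description precedes it below -/
import Mathlib

section
/- For product distributions, total variation distance satisfies V(P^⊗n, Q^⊗n) = 1 - (1 - V(P,Q))^n is in general false; however, the upper bound V(P^⊗n, Q^⊗n) ≤ 1 - (1 - V(P,Q))^n always holds. -/
open Finset Real Filter

/-- Shannon entropy (in bits) of a pmf on a finite type. -/
noncomputable def ent {A : Type} [Fintype A] (p : A → ℝ) : ℝ :=
  -∑ a, p a * Real.logb 2 (p a)

/-- `condEnt p = H(A ∣ B)` for a joint pmf `p` on `A × B`. -/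
noncomputable def condEnt {A B : Type} [Fintype A] [Fintype B] (p : A × B → ℝ) : ℝ :=
  ent p - ent (fun b => ∑ a, p (a, b))

/-- `mutInf p = I(A ; B)` for a joint pmf `p` on `A × B`. -/
noncomputable def mutInf {A B : Type} [Fintype A] [Fintype B] (p : A × B → ℝ) : ℝ :=
  ent (fun a => ∑ b, p (a, b)) + ent (fun b => ∑ a, p (a, b)) - ent p

/-- `condMutInf p = I(A ; C ∣ B)` for a joint pmf `p` on `A × B × C`. -/
noncomputable def condMutInf {A B C : Type} [Fintype A] [Fintype B] [Fintype C]
    (p : A × B × C → ℝ) : ℝ :=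
  ent (fun ab : A × B => ∑ c, p (ab.1, ab.2, c))
    + ent (fun bc : B × C => ∑ a, p (a, bc.1, bc.2))
    - ent (fun b : B => ∑ a, ∑ c, p (a, b, c))
    - ent p

/-- Binary entropy function (in bits). -/
noncomputable def H2 (x : ℝ) : ℝ := -(x * Real.logb 2 x) - (1 - x) * Real.logb 2 (1 - x)

/-- Total variation distance between pmfs on a finite type. -/
noncomputable def tv {A : Type} [Fintype A] (p q : A → ℝ) : ℝ := (∑ a, |p a - q a|) / 2

/-- `n`-fold product distribution of a pmf. -/
noncomputable def prodPMF {A : Type} [Fintype A] (n : ℕ) (p : A → ℝ) : (Fin n → A) → ℝ :=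
  fun xs => ∏ i, p (xs i)

/-- `p` is a probability mass function. -/
def IsPMF {A : Type} [Fintype A] (p : A → ℝ) : Prop := (∀ a, 0 ≤ p a) ∧ ∑ a, p a = 1

lemma sum_prod_pi' {A : Type} [Fintype A] (n : ℕ) (f : A → ℝ) :
    ∑ xs : Fin n → A, ∏ i, f (xs i) = (∑ a, f a) ^ n := by
  rw [← Fintype.piFinset_univ, ← Finset.prod_univ_sum]
  simp [Finset.prod_const]

lemma tv_eq' {A : Type} [Fintype A] (p q : A → ℝ) (hp : IsPMF p) (hq : IsPMF q) :
    tv p q = 1 - ∑ a, min (p a) (q a) := by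
  have h : ∀ a, |p a - q a| = p a + q a - 2 * min (p a) (q a) := by
    intro a
    rcases le_total (p a) (q a) with h | h
    · rw [abs_of_nonpos (by linarith), min_eq_left h]; ring
    · rw [abs_of_nonneg (by linarith), min_eq_right h]; ring
  simp only [tv, h, Finset.sum_sub_distrib, Finset.sum_add_distrib, ← Finset.mul_sum,
    hp.2, hq.2]
  ring

lemma isPMF_prod' {A : Type} [Fintype A] (n : ℕ) (p : A → ℝ) (hp : IsPMF p) :
    IsPMF (prodPMF n p) := by
  constructor
  · intro xs
    exact Finset.prod_nonneg fun i _ => hp.1 _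
  · show ∑ xs : Fin n → A, ∏ i, p (xs i) = 1
    rw [sum_prod_pi', hp.2, one_pow]


/-- The identity `V(P^⊗n, Q^⊗n) = 1 - (1 - V(P,Q))^n` is in general false, but the
inequality `V(P^⊗n, Q^⊗n) ≤ 1 - (1 - V(P,Q))^n` always holds. -/
theorem stmt0 :
    (¬ ∀ (A : Type) (_ : Fintype A) (P Q : A → ℝ), IsPMF P → IsPMF Q → ∀ n : ℕ,
        tv (prodPMF n P) (prodPMF n Q) = 1 - (1 - tv P Q) ^ n) ∧
    (∀ (A : Type) (_ : Fintype A) (P Q : A → ℝ), IsPMF P → IsPMF Q → ∀ n : ℕ,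
        tv (prodPMF n P) (prodPMF n Q) ≤ 1 - (1 - tv P Q) ^ n) := by
  constructor
  · intro h
    set P : Bool → ℝ := fun b => if b then 3/4 else 1/4 with hPdef
    set Q : Bool → ℝ := fun b => if b then 1/4 else 3/4 with hQdef
    have hP : IsPMF P := by
      constructor
      · intro a; cases a <;> norm_num [hPdef]
      · simp [hPdef, Fintype.sum_bool]; norm_num
    have hQ : IsPMF Q := by
      constructor
      · intro a; cases a <;> norm_num [hQdef]
      · simp [hQdef, Fintype.sum_bool]; norm_num
    have htv : tv P Q = 1/2 := by
      simp [tv, hPdef, hQdef, Fintype.sum_bool]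
      norm_num
    have h2 := h Bool inferInstance P Q hP hQ 2
    rw [htv] at h2
    have hlhs : tv (prodPMF 2 P) (prodPMF 2 Q) = 1/2 := by
      have hsum : ∀ f : (Fin 2 → Bool) → ℝ,
          ∑ xs : Fin 2 → Bool, f xs
            = ∑ p : Bool × Bool, f ((piFinTwoEquiv fun _ => Bool).symm p) :=
        fun f => (Equiv.sum_comp (piFinTwoEquiv fun _ => Bool).symm f).symm
      simp only [tv, prodPMF, hsum]
      simp [piFinTwoEquiv, Fin.prod_univ_two, Fintype.sum_prod_type, Fintype.sum_bool,
        hPdef, hQdef]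
      norm_num
    rw [hlhs] at h2
    norm_num at h2
  · intro A _ P Q hP hQ n
    have hPn := isPMF_prod' n P hP
    have hQn := isPMF_prod' n Q hQ
    rw [tv_eq' _ _ hPn hQn, tv_eq' _ _ hP hQ, sub_sub_cancel]
    have key : (∑ a, min (P a) (Q a)) ^ n
        ≤ ∑ xs : Fin n → A, min (prodPMF n P xs) (prodPMF n Q xs) := by
      rw [← sum_prod_pi']
      apply Finset.sum_le_sum
      intro xs _
      apply le_min
      · exact Finset.prod_le_prod (fun i _ => le_min (hP.1 _) (hQ.1 _))
          (fun i _ => min_le_left _ _)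
      · exact Finset.prod_le_prod (fun i _ => le_min (hP.1 _) (hQ.1 _))
          (fun i _ => min_le_right _ _)
    linarith
end

section
/- If P and Q are probability distributions on a finite set with total variation distance ε > 0, then the total variation distance between the n-fold product distributions P^⊗n and Q^⊗n tends to 1 as n → ∞. -/
open Finset Real Filter

lemma sqrt_prod' {ι : Type*} (s : Finset ι) (f : ι → ℝ) (hf : ∀ i ∈ s, 0 ≤ f i) :
    Real.sqrt (∏ i ∈ s, f i) = ∏ i ∈ s, Real.sqrt (f i) := by
  induction s using Finset.cons_induction with
  | empty => simp
  | cons a s ha ih =>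
    rw [Finset.prod_cons, Finset.prod_cons,
      Real.sqrt_mul (hf a (Finset.mem_cons_self _ _)),
      ih (fun i hi => hf i (Finset.mem_cons_of_mem hi))]

lemma sum_prod_eq_pow {A : Type} [Fintype A] (n : ℕ) (g : A → ℝ) :
    ∑ xs : Fin n → A, ∏ i, g (xs i) = (∑ a, g a) ^ n := by
  rw [← Fintype.piFinset_univ (β := fun _ : Fin n => A),
    ← Finset.prod_univ_sum (fun _ => Finset.univ) (fun _ a => g a)]
  simp [Finset.prod_const]

/-- lower bound: 1 - BC ≤ tv for pmfs -/
lemma tv_ge_one_sub_bc {B : Type} [Fintype B] (p q : B → ℝ) (hp : IsPMF p) (hq : IsPMF q) :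
    1 - (∑ b, Real.sqrt (p b * q b)) ≤ tv p q := by
  have key : ∀ b, p b + q b - |p b - q b| ≤ 2 * Real.sqrt (p b * q b) := by
    intro b
    have h1 : min (p b) (q b) ≤ Real.sqrt (p b * q b) := by
      have hmin : 0 ≤ min (p b) (q b) := le_min (hp.1 b) (hq.1 b)
      rw [Real.le_sqrt hmin (mul_nonneg (hp.1 b) (hq.1 b))]
      have := mul_le_mul (min_le_left (p b) (q b)) (min_le_right (p b) (q b)) hmin (hp.1 b)
      nlinarith
    have h2 : p b + q b - |p b - q b| = 2 * min (p b) (q b) := by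
      rcases le_total (p b) (q b) with h | h
      · rw [abs_of_nonpos (by linarith), min_eq_left h]; ring
      · rw [abs_of_nonneg (by linarith), min_eq_right h]; ring
    linarith
  have hsum := Finset.sum_le_sum (fun b (_ : b ∈ Finset.univ) => key b)
  rw [Finset.sum_sub_distrib, Finset.sum_add_distrib, hp.2, hq.2, ← Finset.mul_sum] at hsum
  unfold tv
  linarith

/-- upper bound: tv ≤ 1 for pmfs -/
lemma tv_le_one {B : Type} [Fintype B] (p q : B → ℝ) (hp : IsPMF p) (hq : IsPMF q) :
    tv p q ≤ 1 := by
  have : ∑ b, |p b - q b| ≤ ∑ b, (p b + q b) := by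
    apply Finset.sum_le_sum
    intro b _
    calc |p b - q b| ≤ |p b| + |q b| := abs_sub _ _
      _ = p b + q b := by rw [abs_of_nonneg (hp.1 b), abs_of_nonneg (hq.1 b)]
  rw [Finset.sum_add_distrib, hp.2, hq.2] at this
  unfold tv; linarith

/-- Cauchy–Schwarz: tv² + BC² ≤ 1 -/
lemma tv_sq_add_bc_sq {B : Type} [Fintype B] (p q : B → ℝ) (hp : IsPMF p) (hq : IsPMF q) :
    (tv p q) ^ 2 + (∑ b, Real.sqrt (p b * q b)) ^ 2 ≤ 1 := by
  set f : B → ℝ := fun b => |Real.sqrt (p b) - Real.sqrt (q b)|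
  set g : B → ℝ := fun b => Real.sqrt (p b) + Real.sqrt (q b)
  have hcs := Finset.sum_mul_sq_le_sq_mul_sq Finset.univ f g
  have hfg : ∀ b, f b * g b = |p b - q b| := by
    intro b
    have hg : 0 ≤ g b := add_nonneg (Real.sqrt_nonneg _) (Real.sqrt_nonneg _)
    calc f b * g b = |Real.sqrt (p b) - Real.sqrt (q b)| * |g b| := by rw [abs_of_nonneg hg]
      _ = |(Real.sqrt (p b) - Real.sqrt (q b)) * g b| := (abs_mul _ _).symm
      _ = |p b - q b| := by
          congr 1
          have := Real.sq_sqrt (hp.1 b)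
          have := Real.sq_sqrt (hq.1 b)
          simp only [g]; nlinarith
  have hf2 : ∀ b, f b ^ 2 = p b + q b - 2 * Real.sqrt (p b * q b) := by
    intro b
    rw [sq_abs, Real.sqrt_mul (hp.1 b)]
    have := Real.sq_sqrt (hp.1 b)
    have := Real.sq_sqrt (hq.1 b)
    ring_nf; nlinarith
  have hg2 : ∀ b, g b ^ 2 = p b + q b + 2 * Real.sqrt (p b * q b) := by
    intro b
    rw [Real.sqrt_mul (hp.1 b)]
    have := Real.sq_sqrt (hp.1 b)
    have := Real.sq_sqrt (hq.1 b)
    simp only [g]; nlinarith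
  simp only [hfg] at hcs
  have hF : ∑ b, f b ^ 2 = 2 - 2 * ∑ b, Real.sqrt (p b * q b) := by
    simp only [hf2]
    rw [Finset.sum_sub_distrib, Finset.sum_add_distrib, hp.2, hq.2, ← Finset.mul_sum]
    ring
  have hG : ∑ b, g b ^ 2 = 2 + 2 * ∑ b, Real.sqrt (p b * q b) := by
    simp only [hg2]
    rw [Finset.sum_add_distrib, Finset.sum_add_distrib, hp.2, hq.2, ← Finset.mul_sum]
    ring
  rw [hF, hG] at hcs
  have htv : ∑ b, |p b - q b| = 2 * tv p q := by unfold tv; ring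
  rw [htv] at hcs
  nlinarith

/-- If `V(P,Q) = ε > 0` then `V(P^⊗n, Q^⊗n) → 1` as `n → ∞`. -/
theorem stmt1 {A : Type} [Fintype A] (P Q : A → ℝ) (hP : IsPMF P) (hQ : IsPMF Q)
    (ε : ℝ) (hε : tv P Q = ε) (hpos : 0 < ε) :
    Filter.Tendsto (fun n : ℕ => tv (prodPMF n P) (prodPMF n Q)) Filter.atTop (nhds 1) := by
  set BC : ℝ := ∑ a, Real.sqrt (P a * Q a) with hBCdef
  have hBC0 : 0 ≤ BC := Finset.sum_nonneg fun a _ => Real.sqrt_nonneg _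
  have hε1 : ε ≤ 1 := hε ▸ tv_le_one P Q hP hQ
  have hBCsq : BC ^ 2 ≤ 1 - ε ^ 2 := by
    have := tv_sq_add_bc_sq P Q hP hQ
    rw [hε] at this; linarith
  set r : ℝ := Real.sqrt (1 - ε ^ 2) with hrdef
  have hr0 : 0 ≤ r := Real.sqrt_nonneg _
  have hBCr : BC ≤ r := by
    rw [hrdef, Real.le_sqrt hBC0 (by nlinarith)]
    exact hBCsq
  have hr1 : r < 1 := by
    rw [hrdef]
    calc Real.sqrt (1 - ε ^ 2) < Real.sqrt 1 :=
          Real.sqrt_lt_sqrt (by nlinarith) (by nlinarith)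
      _ = 1 := Real.sqrt_one
  -- product PMFs are PMFs
  have hprodPMF : ∀ (p : A → ℝ), IsPMF p → ∀ n, IsPMF (prodPMF n p) := by
    intro p hp n
    constructor
    · intro xs; exact Finset.prod_nonneg fun i _ => hp.1 _
    · show ∑ xs : Fin n → A, ∏ i, p (xs i) = 1
      rw [sum_prod_eq_pow, hp.2, one_pow]
  -- BC of product = BC ^ n
  have hBCn : ∀ n : ℕ, ∑ xs : Fin n → A, Real.sqrt (prodPMF n P xs * prodPMF n Q xs) = BC ^ n := by
    intro n
    have : ∀ xs : Fin n → A,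
        Real.sqrt (prodPMF n P xs * prodPMF n Q xs) = ∏ i, Real.sqrt (P (xs i) * Q (xs i)) := by
      intro xs
      rw [show prodPMF n P xs * prodPMF n Q xs = ∏ i, (P (xs i) * Q (xs i)) by
        unfold prodPMF; rw [Finset.prod_mul_distrib]]
      exact sqrt_prod' _ _ fun i _ => mul_nonneg (hP.1 _) (hQ.1 _)
    simp only [this]
    exact sum_prod_eq_pow n (fun a => Real.sqrt (P a * Q a))
  have hlo : ∀ n : ℕ, 1 - r ^ n ≤ tv (prodPMF n P) (prodPMF n Q) := by
    intro n
    have h1 := tv_ge_one_sub_bc (prodPMF n P) (prodPMF n Q) (hprodPMF P hP n) (hprodPMF Q hQ n)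
    rw [hBCn n] at h1
    have : BC ^ n ≤ r ^ n := pow_le_pow_left₀ hBC0 hBCr n
    linarith
  have hhi : ∀ n : ℕ, tv (prodPMF n P) (prodPMF n Q) ≤ 1 := fun n =>
    tv_le_one _ _ (hprodPMF P hP n) (hprodPMF Q hQ n)
  have hlim : Filter.Tendsto (fun n : ℕ => 1 - r ^ n) Filter.atTop (nhds 1) := by
    have := tendsto_pow_atTop_nhds_zero_of_lt_one hr0 hr1
    have h := (tendsto_const_nhds (x := (1:ℝ)) (f := Filter.atTop (α := ℕ))).sub this
    simpa using h
  exact tendsto_of_tendsto_of_tendsto_of_le_of_le hlim tendsto_const_nhds hlo hhi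
end

section
/- For a conditional distribution P(x₁, x₂ | i₁, i₂) on finite sets, the non-signaling condition that the marginal Σ_{x₁} P(x₁, x₂ | i₁, i₂) is independent of i₁ for all x₂, i₂ is equivalent to the condition that, under every product input distribution making I₁, I₂ independent, the mutual information I(I₁; X₂ | I₂) = 0. -/
open Finset Real Filter

section Aux

lemma phi_mul (a b : ℝ) (ha : 0 ≤ a) (hb : 0 ≤ b) :
    a * b * Real.logb 2 (a * b)
      = b * (a * Real.logb 2 a) + a * (b * Real.logb 2 b) := by
  rcases ha.eq_or_lt with h | h
  · simp [← h]
  rcases hb.eq_or_lt with h' | h'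
  · simp [← h']
  rw [Real.logb_mul h.ne' h'.ne']; ring

lemma gibbs_pt (p q : ℝ) (hp : 0 ≤ p) (hq : 0 ≤ q) (habs : q = 0 → p = 0) :
    0 ≤ (q - p) / Real.log 2 - p * (Real.logb 2 q - Real.logb 2 p) ∧
    ((q - p) / Real.log 2 - p * (Real.logb 2 q - Real.logb 2 p) = 0 → p = q) := by
  have hlog2 : (0:ℝ) < Real.log 2 := Real.log_pos (by norm_num)
  rcases hp.eq_or_lt with h | h
  · constructor
    · rw [← h]
      simp
      positivity
    · intro he; rw [← h] at he ⊢
      field_simp at he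
      linarith [he]
  · have hq' : 0 < q := by
      rcases hq.eq_or_lt with h' | h'
      · exact absurd (habs h'.symm) h.ne'
      · exact h'
    have hlb : Real.logb 2 q - Real.logb 2 p = Real.log (q / p) / Real.log 2 := by
      rw [Real.log_div hq'.ne' h.ne']
      simp [Real.logb]
      ring
    have hle : Real.log (q / p) ≤ q / p - 1 := Real.log_le_sub_one_of_pos (by positivity)
    have hkey : p * (q / p - 1) = q - p := by field_simp
    constructor
    · rw [hlb]
      have h3 : p * (Real.log (q / p) / Real.log 2) ≤ p * ((q / p - 1) / Real.log 2) := by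
        apply mul_le_mul_of_nonneg_left _ h.le
        exact div_le_div_of_nonneg_right hle hlog2.le |>.trans_eq rfl
      have h2 : p * ((q / p - 1) / Real.log 2) = (q - p) / Real.log 2 := by
        rw [← hkey]; ring
      linarith
    · intro he
      rw [hlb] at he
      have heq : Real.log (q / p) = q / p - 1 := by
        have h4 : p * (Real.log (q / p)) = q - p := by
          field_simp at he
          linarith [he]
        field_simp
        nlinarith [h4]
      by_contra hne
      have hne' : q / p ≠ 1 := by
        intro h1
        apply hne
        field_simp at h1
        linarith
      exact absurd heq (Real.log_lt_sub_one_of_pos (by positivity) hne').ne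

lemma ent_scale {B C : Type} [Fintype B] [Fintype C] (p : B → ℝ) (r : B → C → ℝ)
    (hp0 : ∀ b, 0 ≤ p b) (hr0 : ∀ b c, 0 ≤ r b c) (hr1 : ∀ b, ∑ c, r b c = 1) :
    ent (fun bc : B × C => p bc.1 * r bc.1 bc.2)
      = ent p - ∑ b, p b * ∑ c, r b c * Real.logb 2 (r b c) := by
  unfold ent
  rw [Fintype.sum_prod_type]
  have key : ∀ b, ∑ c, p b * r b c * Real.logb 2 (p b * r b c)
      = p b * Real.logb 2 (p b) + p b * ∑ c, r b c * Real.logb 2 (r b c) := by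
    intro b
    calc ∑ c, p b * r b c * Real.logb 2 (p b * r b c)
        = ∑ c, (r b c * (p b * Real.logb 2 (p b)) + p b * (r b c * Real.logb 2 (r b c))) :=
          Finset.sum_congr rfl fun c _ => phi_mul _ _ (hp0 b) (hr0 b c)
      _ = (∑ c, r b c) * (p b * Real.logb 2 (p b)) + p b * ∑ c, r b c * Real.logb 2 (r b c) := by
          rw [Finset.sum_add_distrib, ← Finset.sum_mul, ← Finset.mul_sum]
      _ = p b * Real.logb 2 (p b) + p b * ∑ c, r b c * Real.logb 2 (r b c) := by
          rw [hr1 b]; ring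
  rw [Finset.sum_congr rfl fun b _ => key b, Finset.sum_add_distrib]
  ring

lemma condMutInf_eq {I1 I2 X2 : Type} [Fintype I1] [Fintype I2] [Fintype X2]
    (p1 : I1 → ℝ) (p2 : I2 → ℝ) (Q : I1 → I2 → X2 → ℝ)
    (h1 : IsPMF p1) (h2 : IsPMF p2)
    (hQ0 : ∀ i1 i2 x2, 0 ≤ Q i1 i2 x2) (hQ1 : ∀ i1 i2, ∑ x2, Q i1 i2 x2 = 1) :
    condMutInf (fun t : I1 × I2 × X2 => p1 t.1 * p2 t.2.1 * Q t.1 t.2.1 t.2.2)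
      = (∑ i1, ∑ i2, p1 i1 * p2 i2 * ∑ x2, Q i1 i2 x2 * Real.logb 2 (Q i1 i2 x2))
        - ∑ i2, p2 i2 * ∑ x2, (∑ j1, p1 j1 * Q j1 i2 x2)
            * Real.logb 2 (∑ j1, p1 j1 * Q j1 i2 x2) := by
  have qbar0 : ∀ i2 x2, 0 ≤ ∑ j1, p1 j1 * Q j1 i2 x2 := fun i2 x2 =>
    Finset.sum_nonneg fun j1 _ => mul_nonneg (h1.1 j1) (hQ0 j1 i2 x2)
  have qbar1 : ∀ i2, ∑ x2, ∑ j1, p1 j1 * Q j1 i2 x2 = 1 := by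
    intro i2
    rw [Finset.sum_comm]
    calc ∑ j1, ∑ x2, p1 j1 * Q j1 i2 x2 = ∑ j1, p1 j1 * ∑ x2, Q j1 i2 x2 := by
          simp [Finset.mul_sum]
      _ = 1 := by simp [hQ1, h1.2]
  unfold condMutInf
  have e1 : ent (fun ab : I1 × I2 =>
      ∑ c, p1 ab.1 * p2 ab.2 * Q ab.1 ab.2 c)
      = ent p1 - ∑ i2, p2 i2 * Real.logb 2 (p2 i2) := by
    have : (fun ab : I1 × I2 => ∑ c, p1 ab.1 * p2 ab.2 * Q ab.1 ab.2 c)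
        = fun ab : I1 × I2 => p1 ab.1 * p2 ab.2 := by
      funext ab
      rw [← Finset.mul_sum, hQ1]
      ring
    rw [this, ent_scale p1 (fun _ => p2) h1.1 (fun _ => h2.1) (fun _ => h2.2),
      ← Finset.sum_mul, h1.2, one_mul]
  have e2 : ent (fun bc : I2 × X2 =>
      ∑ a, p1 a * p2 bc.1 * Q a bc.1 bc.2)
      = ent p2 - ∑ i2, p2 i2 * ∑ x2, (∑ j1, p1 j1 * Q j1 i2 x2)
          * Real.logb 2 (∑ j1, p1 j1 * Q j1 i2 x2) := by
    have : (fun bc : I2 × X2 => ∑ a, p1 a * p2 bc.1 * Q a bc.1 bc.2)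
        = fun bc : I2 × X2 => p2 bc.1 * ∑ j1, p1 j1 * Q j1 bc.1 bc.2 := by
      funext bc
      rw [Finset.mul_sum]
      exact Finset.sum_congr rfl fun a _ => by ring
    rw [this, ent_scale p2 (fun i2 x2 => ∑ j1, p1 j1 * Q j1 i2 x2) h2.1 qbar0 qbar1]
  have e3 : ent (fun b : I2 => ∑ a, ∑ c, p1 a * p2 b * Q a b c) = ent p2 := by
    have : (fun b : I2 => ∑ a, ∑ c, p1 a * p2 b * Q a b c) = p2 := by
      funext b
      calc ∑ a, ∑ c, p1 a * p2 b * Q a b c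
          = ∑ a, p1 a * p2 b * ∑ c, Q a b c := by simp [Finset.mul_sum]
        _ = p2 b := by
            simp only [hQ1, mul_one]
            rw [← Finset.sum_mul, h1.2, one_mul]
    rw [this]
  have e4 : ent (fun t : I1 × I2 × X2 => p1 t.1 * p2 t.2.1 * Q t.1 t.2.1 t.2.2)
      = ent p1 - (∑ i2, p2 i2 * Real.logb 2 (p2 i2))
        - ∑ i1, ∑ i2, p1 i1 * p2 i2 * ∑ x2, Q i1 i2 x2 * Real.logb 2 (Q i1 i2 x2) := by
    have hfun : (fun t : I1 × I2 × X2 => p1 t.1 * p2 t.2.1 * Q t.1 t.2.1 t.2.2)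
        = fun bc : I1 × (I2 × X2) => p1 bc.1 * (p2 bc.2.1 * Q bc.1 bc.2.1 bc.2.2) := by
      funext t; ring
    have hr0 : ∀ (b : I1) (c : I2 × X2), 0 ≤ p2 c.1 * Q b c.1 c.2 := fun b c =>
      mul_nonneg (h2.1 c.1) (hQ0 b c.1 c.2)
    have hr1 : ∀ b : I1, ∑ c : I2 × X2, p2 c.1 * Q b c.1 c.2 = 1 := by
      intro b
      rw [Fintype.sum_prod_type]
      calc ∑ i2, ∑ x2, p2 i2 * Q b i2 x2 = ∑ i2, p2 i2 * ∑ x2, Q b i2 x2 := by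
            simp [Finset.mul_sum]
        _ = 1 := by simp [hQ1, h2.2]
    have h5 : ent (fun bc : I1 × (I2 × X2) => p1 bc.1 * (p2 bc.2.1 * Q bc.1 bc.2.1 bc.2.2))
        = ent p1 - ∑ b : I1, p1 b * (∑ c : I2 × X2, (p2 c.1 * Q b c.1 c.2)
            * Real.logb 2 (p2 c.1 * Q b c.1 c.2)) :=
      ent_scale p1 (fun (b : I1) (c : I2 × X2) => p2 c.1 * Q b c.1 c.2) h1.1 hr0 hr1
    rw [hfun, h5]
    have inner : ∀ i1, ∑ c : I2 × X2, p2 c.1 * Q i1 c.1 c.2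
        * Real.logb 2 (p2 c.1 * Q i1 c.1 c.2)
        = (∑ i2, p2 i2 * Real.logb 2 (p2 i2))
          + ∑ i2, p2 i2 * ∑ x2, Q i1 i2 x2 * Real.logb 2 (Q i1 i2 x2) := by
      intro i1
      rw [Fintype.sum_prod_type]
      have : ∀ i2, ∑ x2, p2 i2 * Q i1 i2 x2 * Real.logb 2 (p2 i2 * Q i1 i2 x2)
          = p2 i2 * Real.logb 2 (p2 i2)
            + p2 i2 * ∑ x2, Q i1 i2 x2 * Real.logb 2 (Q i1 i2 x2) := by
        intro i2
        calc ∑ x2, p2 i2 * Q i1 i2 x2 * Real.logb 2 (p2 i2 * Q i1 i2 x2)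
            = ∑ x2, (Q i1 i2 x2 * (p2 i2 * Real.logb 2 (p2 i2))
                + p2 i2 * (Q i1 i2 x2 * Real.logb 2 (Q i1 i2 x2))) :=
              Finset.sum_congr rfl fun x2 _ => phi_mul _ _ (h2.1 i2) (hQ0 i1 i2 x2)
          _ = (∑ x2, Q i1 i2 x2) * (p2 i2 * Real.logb 2 (p2 i2))
                + p2 i2 * ∑ x2, Q i1 i2 x2 * Real.logb 2 (Q i1 i2 x2) := by
              rw [Finset.sum_add_distrib, ← Finset.sum_mul, ← Finset.mul_sum]
          _ = _ := by rw [hQ1]; ring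
      rw [Finset.sum_congr rfl fun i2 _ => this i2, Finset.sum_add_distrib]
    have : ∑ i1, p1 i1 * (∑ c : I2 × X2, p2 c.1 * Q i1 c.1 c.2
        * Real.logb 2 (p2 c.1 * Q i1 c.1 c.2))
        = (∑ i2, p2 i2 * Real.logb 2 (p2 i2))
          + ∑ i1, ∑ i2, p1 i1 * p2 i2 * ∑ x2, Q i1 i2 x2 * Real.logb 2 (Q i1 i2 x2) := by
      calc ∑ i1, p1 i1 * (∑ c : I2 × X2, p2 c.1 * Q i1 c.1 c.2
            * Real.logb 2 (p2 c.1 * Q i1 c.1 c.2))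
          = ∑ i1, (p1 i1 * (∑ i2, p2 i2 * Real.logb 2 (p2 i2))
              + p1 i1 * ∑ i2, p2 i2 * ∑ x2, Q i1 i2 x2 * Real.logb 2 (Q i1 i2 x2)) := by
            refine Finset.sum_congr rfl fun i1 _ => ?_
            rw [inner i1]; ring
        _ = (∑ i1, p1 i1) * (∑ i2, p2 i2 * Real.logb 2 (p2 i2))
              + ∑ i1, p1 i1 * ∑ i2, p2 i2 * ∑ x2, Q i1 i2 x2 * Real.logb 2 (Q i1 i2 x2) := by
            rw [Finset.sum_add_distrib, ← Finset.sum_mul]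
        _ = _ := by
            rw [h1.2, one_mul]
            congr 1
            refine Finset.sum_congr rfl fun i1 _ => ?_
            rw [Finset.mul_sum]
            exact Finset.sum_congr rfl fun i2 _ => by ring
    rw [this]
    ring
  rw [e1, e2, e3, e4]
  ring

lemma forward_core {I1 I2 X2 : Type} [Fintype I1] [Fintype I2] [Fintype X2]
    (p1 : I1 → ℝ) (p2 : I2 → ℝ) (Q : I1 → I2 → X2 → ℝ)
    (h1 : IsPMF p1) (h2 : IsPMF p2)
    (hQ0 : ∀ a b c, 0 ≤ Q a b c) (hQ1 : ∀ a b, ∑ c, Q a b c = 1)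
    (hNS : ∀ a a' b c, Q a b c = Q a' b c) :
    condMutInf (fun t : I1 × I2 × X2 => p1 t.1 * p2 t.2.1 * Q t.1 t.2.1 t.2.2) = 0 := by
  rw [condMutInf_eq p1 p2 Q h1 h2 hQ0 hQ1]
  rcases isEmpty_or_nonempty I1 with hE | hne
  · exfalso
    have := h1.2
    rw [Finset.univ_eq_empty, Finset.sum_empty] at this
    norm_num at this
  · obtain ⟨a0⟩ := hne
    have hqb : ∀ b c, ∑ j, p1 j * Q j b c = Q a0 b c := by
      intro b c
      calc ∑ j, p1 j * Q j b c = ∑ j, p1 j * Q a0 b c :=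
            Finset.sum_congr rfl fun j _ => by rw [hNS j a0 b c]
        _ = (∑ j, p1 j) * Q a0 b c := by rw [Finset.sum_mul]
        _ = Q a0 b c := by rw [h1.2, one_mul]
    have hT : ∑ a, ∑ b, p1 a * p2 b * ∑ c, Q a b c * Real.logb 2 (Q a b c)
        = ∑ b, p2 b * ∑ c, Q a0 b c * Real.logb 2 (Q a0 b c) := by
      calc ∑ a, ∑ b, p1 a * p2 b * ∑ c, Q a b c * Real.logb 2 (Q a b c)
          = ∑ a, p1 a * ∑ b, p2 b * ∑ c, Q a0 b c * Real.logb 2 (Q a0 b c) := by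
            refine Finset.sum_congr rfl fun a _ => ?_
            rw [Finset.mul_sum]
            refine Finset.sum_congr rfl fun b _ => ?_
            have : ∀ c, Q a b c = Q a0 b c := fun c => hNS a a0 b c
            simp only [this]
            ring
        _ = (∑ a, p1 a) * ∑ b, p2 b * ∑ c, Q a0 b c * Real.logb 2 (Q a0 b c) := by
            rw [← Finset.sum_mul]
        _ = _ := by rw [h1.2, one_mul]
    rw [hT]
    have hU : ∀ b, ∑ x2, (∑ j1, p1 j1 * Q j1 b x2) * Real.logb 2 (∑ j1, p1 j1 * Q j1 b x2)
        = ∑ c, Q a0 b c * Real.logb 2 (Q a0 b c) :=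
      fun b => Finset.sum_congr rfl fun c _ => by rw [hqb b c]
    have hU2 : ∑ b, p2 b * ∑ x2, (∑ j1, p1 j1 * Q j1 b x2)
        * Real.logb 2 (∑ j1, p1 j1 * Q j1 b x2)
        = ∑ b, p2 b * ∑ c, Q a0 b c * Real.logb 2 (Q a0 b c) :=
      Finset.sum_congr rfl fun b _ => by rw [hU b]
    rw [hU2]
    ring

lemma reverse_core {I1 I2 X2 : Type} [Fintype I1] [Fintype I2] [Fintype X2]
    (p1 : I1 → ℝ) (p2 : I2 → ℝ) (Q : I1 → I2 → X2 → ℝ)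
    (h1 : IsPMF p1) (h2 : IsPMF p2) (hp1 : ∀ a, 0 < p1 a) (hp2 : ∀ b, 0 < p2 b)
    (hQ0 : ∀ a b c, 0 ≤ Q a b c) (hQ1 : ∀ a b, ∑ c, Q a b c = 1)
    (hz : condMutInf (fun t : I1 × I2 × X2 => p1 t.1 * p2 t.2.1 * Q t.1 t.2.1 t.2.2) = 0) :
    ∀ a b c, Q a b c = ∑ j, p1 j * Q j b c := by
  have hqb0 : ∀ b c, 0 ≤ ∑ j, p1 j * Q j b c := fun b c =>
    Finset.sum_nonneg fun j _ => mul_nonneg (hp1 j).le (hQ0 j b c)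
  have hqb1 : ∀ b, ∑ c, ∑ j, p1 j * Q j b c = 1 := by
    intro b
    rw [Finset.sum_comm]
    calc ∑ j, ∑ c, p1 j * Q j b c = ∑ j, p1 j * ∑ c, Q j b c := by simp [Finset.mul_sum]
      _ = 1 := by simp [hQ1, h1.2]
  have habs : ∀ a b c, (∑ j, p1 j * Q j b c) = 0 → Q a b c = 0 := by
    intro a b c h0
    have := (Finset.sum_eq_zero_iff_of_nonneg
      (fun j _ => mul_nonneg (hp1 j).le (hQ0 j b c))).mp h0 a (Finset.mem_univ a)
    rcases mul_eq_zero.mp this with h | h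
    · exact absurd h (hp1 a).ne'
    · exact h
  set g : I1 → I2 → X2 → ℝ := fun a b c =>
    ((∑ j, p1 j * Q j b c) - Q a b c) / Real.log 2
      - Q a b c * (Real.logb 2 (∑ j, p1 j * Q j b c) - Real.logb 2 (Q a b c)) with hg
  have hg0 : ∀ a b c, 0 ≤ g a b c := fun a b c =>
    (gibbs_pt _ _ (hQ0 a b c) (hqb0 b c) (habs a b c)).1
  have hz' : (∑ a, ∑ b, p1 a * p2 b * ∑ c, Q a b c * Real.logb 2 (Q a b c))
      - ∑ b, p2 b * ∑ c, (∑ j, p1 j * Q j b c) * Real.logb 2 (∑ j, p1 j * Q j b c) = 0 :=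
    (condMutInf_eq p1 p2 Q h1 h2 hQ0 hQ1).symm.trans hz
  have hU : (∑ b, p2 b * ∑ c, (∑ j, p1 j * Q j b c) * Real.logb 2 (∑ j, p1 j * Q j b c))
      = ∑ a, ∑ b, p1 a * p2 b * ∑ c, Q a b c * Real.logb 2 (∑ j, p1 j * Q j b c) := by
    calc ∑ b, p2 b * ∑ c, (∑ j, p1 j * Q j b c) * Real.logb 2 (∑ j, p1 j * Q j b c)
        = ∑ b, ∑ a, p1 a * p2 b * ∑ c, Q a b c * Real.logb 2 (∑ j, p1 j * Q j b c) := by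
          refine Finset.sum_congr rfl fun b _ => ?_
          calc p2 b * ∑ c, (∑ j, p1 j * Q j b c) * Real.logb 2 (∑ j, p1 j * Q j b c)
              = p2 b * ∑ c, ∑ a, p1 a * Q a b c * Real.logb 2 (∑ j, p1 j * Q j b c) := by
                congr 1
                exact Finset.sum_congr rfl fun c _ => by rw [Finset.sum_mul]
            _ = p2 b * ∑ a, ∑ c, p1 a * Q a b c * Real.logb 2 (∑ j, p1 j * Q j b c) := by
                rw [Finset.sum_comm]
            _ = ∑ a, p1 a * p2 b * ∑ c, Q a b c * Real.logb 2 (∑ j, p1 j * Q j b c) := by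
                rw [Finset.mul_sum]
                refine Finset.sum_congr rfl fun a _ => ?_
                rw [Finset.mul_sum, Finset.mul_sum]
                exact Finset.sum_congr rfl fun c _ => by ring
      _ = _ := Finset.sum_comm
  have hinner : ∀ a b, ∑ c, g a b c
      = (∑ c, Q a b c * Real.logb 2 (Q a b c))
        - ∑ c, Q a b c * Real.logb 2 (∑ j, p1 j * Q j b c) := by
    intro a b
    have hz2 : ∑ c, ((∑ j, p1 j * Q j b c) - Q a b c) / Real.log 2 = 0 := by
      rw [← Finset.sum_div, Finset.sum_sub_distrib, hqb1 b, hQ1 a b, sub_self, zero_div]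
    calc ∑ c, g a b c
        = ∑ c, (((∑ j, p1 j * Q j b c) - Q a b c) / Real.log 2
            + (Q a b c * Real.logb 2 (Q a b c)
              - Q a b c * Real.logb 2 (∑ j, p1 j * Q j b c))) :=
          Finset.sum_congr rfl fun c _ => by rw [hg]; ring
      _ = _ := by
          rw [Finset.sum_add_distrib, hz2, zero_add, Finset.sum_sub_distrib]
  have hsum : ∑ a, ∑ b, p1 a * p2 b * ∑ c, g a b c = 0 := by
    calc ∑ a, ∑ b, p1 a * p2 b * ∑ c, g a b c
        = ∑ a, ∑ b, (p1 a * p2 b * ∑ c, Q a b c * Real.logb 2 (Q a b c)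
            - p1 a * p2 b * ∑ c, Q a b c * Real.logb 2 (∑ j, p1 j * Q j b c)) := by
          refine Finset.sum_congr rfl fun a _ => Finset.sum_congr rfl fun b _ => ?_
          rw [hinner a b]; ring
      _ = (∑ a, ∑ b, p1 a * p2 b * ∑ c, Q a b c * Real.logb 2 (Q a b c))
            - ∑ a, ∑ b, p1 a * p2 b * ∑ c, Q a b c * Real.logb 2 (∑ j, p1 j * Q j b c) := by
          simp [Finset.sum_sub_distrib]
      _ = 0 := by rw [← hU]; exact hz'
  intro a b c
  have nn1 : ∀ a' : I1, ∀ b' : I2, 0 ≤ p1 a' * p2 b' * ∑ c', g a' b' c' := fun a' b' =>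
    mul_nonneg (mul_nonneg (hp1 a').le (hp2 b').le) (Finset.sum_nonneg fun c' _ => hg0 a' b' c')
  have step1 : ∑ b', p1 a * p2 b' * ∑ c', g a b' c' = 0 :=
    (Finset.sum_eq_zero_iff_of_nonneg fun a' _ =>
      Finset.sum_nonneg fun b' _ => nn1 a' b').mp hsum a (Finset.mem_univ a)
  have step2 : p1 a * p2 b * ∑ c', g a b c' = 0 :=
    (Finset.sum_eq_zero_iff_of_nonneg fun b' _ => nn1 a b').mp step1 b (Finset.mem_univ b)
  have step3 : ∑ c', g a b c' = 0 := by
    rcases mul_eq_zero.mp step2 with h | h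
    · exact absurd h (mul_pos (hp1 a) (hp2 b)).ne'
    · exact h
  have step4 : g a b c = 0 :=
    (Finset.sum_eq_zero_iff_of_nonneg fun c' _ => hg0 a b c').mp step3 c (Finset.mem_univ c)
  exact (gibbs_pt _ _ (hQ0 a b c) (hqb0 b c) (habs a b c)).2 step4

end Aux

/-- For a bipartite box `P(x₁,x₂ ∣ i₁,i₂)`, the marginal non-signaling constraint
(towards party 2) is equivalent to `I(I₁; X₂ ∣ I₂) = 0` under every full-support
product input distribution. -/
theorem stmt5 {I1 I2 X1 X2 : Type} [Fintype I1] [Fintype I2] [Fintype X1] [Fintype X2]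
    (P : I1 → I2 → X1 × X2 → ℝ) (hP : ∀ i1 i2, IsPMF (P i1 i2)) :
    (∀ i1 i1' i2 x2, ∑ x1, P i1 i2 (x1, x2) = ∑ x1, P i1' i2 (x1, x2)) ↔
    (∀ p1 : I1 → ℝ, ∀ p2 : I2 → ℝ, IsPMF p1 → IsPMF p2 →
      (∀ i1, 0 < p1 i1) → (∀ i2, 0 < p2 i2) →
      condMutInf
        (fun t : I1 × I2 × X2 => p1 t.1 * p2 t.2.1 * ∑ x1, P t.1 t.2.1 (x1, t.2.2)) = 0) := by
  have hQ0 : ∀ (a : I1) (b : I2) (c : X2), 0 ≤ ∑ x1, P a b (x1, c) := fun a b c =>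
    Finset.sum_nonneg fun x1 _ => (hP a b).1 _
  have hQ1 : ∀ (a : I1) (b : I2), ∑ c, ∑ x1, P a b (x1, c) = 1 := by
    intro a b
    rw [Finset.sum_comm]
    have := (hP a b).2
    rwa [Fintype.sum_prod_type] at this
  constructor
  · intro hNS p1 p2 h1 h2 hp1 hp2
    exact forward_core p1 p2 (fun a b c => ∑ x1, P a b (x1, c)) h1 h2 hQ0 hQ1
      (fun a a' b c => hNS a a' b c)
  · intro h i1 i1' i2 x2
    have hne1 : Nonempty I1 := ⟨i1⟩
    have hne2 : Nonempty I2 := ⟨i2⟩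
    have hc1 : 0 < (Fintype.card I1 : ℝ) := by
      exact_mod_cast Fintype.card_pos
    have hc2 : 0 < (Fintype.card I2 : ℝ) := by
      exact_mod_cast Fintype.card_pos
    set p1 : I1 → ℝ := fun _ => (Fintype.card I1 : ℝ)⁻¹ with hp1def
    set p2 : I2 → ℝ := fun _ => (Fintype.card I2 : ℝ)⁻¹ with hp2def
    have h1 : IsPMF p1 := by
      constructor
      · intro a; positivity
      · rw [Finset.sum_const, Finset.card_univ, nsmul_eq_mul]
        field_simp
    have h2 : IsPMF p2 := by
      constructor
      · intro a; positivity
      · rw [Finset.sum_const, Finset.card_univ, nsmul_eq_mul]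
        field_simp
    have hp1 : ∀ a, 0 < p1 a := fun a => by positivity
    have hp2 : ∀ b, 0 < p2 b := fun b => by positivity
    have hz := h p1 p2 h1 h2 hp1 hp2
    have key := reverse_core p1 p2 (fun a b c => ∑ x1, P a b (x1, c))
      h1 h2 hp1 hp2 hQ0 hQ1 hz
    exact (key i1 i2 x2).trans (key i1' i2 x2).symm
end
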